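/- arXiv:2211.15514 — 2 statements merged into one kernel-verified Lean document; each statement's English description precedes it below -/
import Mathlib

section
/- Let n be a positive natural number and (X, d) a metric space. For adjacency functions A, B : Fin n × Fin n → X define Δ(A, B) = min over permutations σ of Fin n of ( ∑_{i,j} d(A(i,j), B(σ(i),σ(j)))² )^{1/2}. Then Δ is a pseudometric on the space of such adjacency functions: Δ(A, B) ≥ 0, Δ(A, A) = 0, Δ(A, B) = Δ(B, A), and Δ(A, C) ≤ Δ(A, B) + Δ(B, C). -/
/-- The graph-matching distance between two `X`-attributed adjacency functions
over node set `Fin n`: the minimum, over all permutations `σ` of the nodes, of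
the ℓ2-distortion of the attributes. -/
noncomputable def matchDist {n : ℕ} {X : Type*} [MetricSpace X]
    (A B : Fin n × Fin n → X) : ℝ :=
  ⨅ σ : Equiv.Perm (Fin n),
    Real.sqrt (∑ i, ∑ j, dist (A (i, j)) (B (σ i, σ j)) ^ 2)

private lemma sqrt_sum_sq_add_le {ι : Type*} [Fintype ι] (x y : ι → ℝ) :
    Real.sqrt (∑ i, (x i + y i) ^ 2) ≤
      Real.sqrt (∑ i, x i ^ 2) + Real.sqrt (∑ i, y i ^ 2) := by
  have h := norm_add_le ((WithLp.equiv 2 (ι → ℝ)).symm x) ((WithLp.equiv 2 (ι → ℝ)).symm y)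
  simpa [EuclideanSpace.norm_eq, Real.norm_eq_abs, sq_abs] using h

private lemma matchDist_bdd {n : ℕ} {X : Type*} [MetricSpace X]
    (A B : Fin n × Fin n → X) :
    BddBelow (Set.range fun σ : Equiv.Perm (Fin n) =>
      Real.sqrt (∑ i, ∑ j, dist (A (i, j)) (B (σ i, σ j)) ^ 2)) := by
  refine ⟨0, ?_⟩
  rintro x ⟨σ, rfl⟩
  exact Real.sqrt_nonneg _

/-- The graph-matching distance is a pseudometric on the space of `X`-attributed
adjacency functions over `Fin n`: nonnegative, zero on the diagonal, symmetric,
and satisfying the triangle inequality. -/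
theorem matchDist_is_pseudometric {n : ℕ} (hn : 0 < n)
    {X : Type*} [MetricSpace X] :
    (∀ A B : Fin n × Fin n → X, 0 ≤ matchDist A B) ∧
    (∀ A : Fin n × Fin n → X, matchDist A A = 0) ∧
    (∀ A B : Fin n × Fin n → X, matchDist A B = matchDist B A) ∧
    (∀ A B C : Fin n × Fin n → X,
      matchDist A C ≤ matchDist A B + matchDist B C) := by
  have hnonneg : ∀ A B : Fin n × Fin n → X, 0 ≤ matchDist A B := fun A B =>
    Real.iInf_nonneg fun σ => Real.sqrt_nonneg _
  -- the key reindexing identity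
  have hre : ∀ (A B : Fin n × Fin n → X) (σ τ : Equiv.Perm (Fin n)),
      (∑ i, ∑ j, dist (A (σ i, σ j)) (B (τ (σ i), τ (σ j))) ^ 2) =
      ∑ i, ∑ j, dist (A (i, j)) (B (τ i, τ j)) ^ 2 := by
    intro A B σ τ
    rw [← Equiv.sum_comp σ (fun i => ∑ j, dist (A (i, j)) (B (τ i, τ j)) ^ 2)]
    exact Finset.sum_congr rfl fun i _ =>
      Equiv.sum_comp σ (fun j => dist (A (σ i, j)) (B (τ (σ i), τ j)) ^ 2)
  refine ⟨hnonneg, ?_, ?_, ?_⟩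
  · intro A
    refine le_antisymm ?_ (hnonneg A A)
    have h := ciInf_le (matchDist_bdd A A) (1 : Equiv.Perm (Fin n))
    simpa [matchDist] using h
  · intro A B
    have key : ∀ (A B : Fin n × Fin n → X), matchDist A B ≤ matchDist B A := by
      intro A B
      refine le_ciInf fun σ => ?_
      have h := ciInf_le (matchDist_bdd A B) σ⁻¹
      refine h.trans (le_of_eq ?_)
      congr 1
      have h2 := hre A B σ σ⁻¹
      simp only [← Equiv.Perm.mul_apply, inv_mul_cancel, Equiv.Perm.one_apply] at h2
      rw [← h2]
      simp [dist_comm]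
    exact le_antisymm (key A B) (key B A)
  · intro A B C
    refine le_ciInf_add_ciInf fun σ τ => ?_
    have h := ciInf_le (matchDist_bdd A C) (τ * σ)
    refine h.trans ?_
    simp only [Equiv.Perm.mul_apply]
    calc Real.sqrt (∑ i, ∑ j, dist (A (i, j)) (C (τ (σ i), τ (σ j))) ^ 2)
        ≤ Real.sqrt (∑ i, ∑ j,
            (dist (A (i, j)) (B (σ i, σ j)) + dist (B (σ i, σ j)) (C (τ (σ i), τ (σ j)))) ^ 2) := by
          apply Real.sqrt_le_sqrt
          refine Finset.sum_le_sum fun i _ => Finset.sum_le_sum fun j _ => ?_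
          have := dist_triangle (A (i, j)) (B (σ i, σ j)) (C (τ (σ i), τ (σ j)))
          exact pow_le_pow_left₀ dist_nonneg this 2
      _ ≤ Real.sqrt (∑ i, ∑ j, dist (A (i, j)) (B (σ i, σ j)) ^ 2) +
            Real.sqrt (∑ i, ∑ j, dist (B (σ i, σ j)) (C (τ (σ i), τ (σ j))) ^ 2) := by
          have h2 := sqrt_sum_sq_add_le
            (fun p : Fin n × Fin n => dist (A p) (B (σ p.1, σ p.2)))
            (fun p : Fin n × Fin n => dist (B (σ p.1, σ p.2)) (C (τ (σ p.1), τ (σ p.2))))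
          simpa [Fintype.sum_prod_type] using h2
      _ = Real.sqrt (∑ i, ∑ j, dist (A (i, j)) (B (σ i, σ j)) ^ 2) +
            Real.sqrt (∑ i, ∑ j, dist (B (i, j)) (C (τ i, τ j)) ^ 2) := by
          rw [hre B C σ τ]
end

section
/- Let (X, d) be a metric space and η > 0. Define d_η on (X × ℝ≥0) × (X × ℝ≥0) by d_η((q₀, w₀), (q₁, w₁)) = min{ d(q₀, q₁) + η·|w₀ − w₁|, η·(w₀ + w₁) }. Then d_η is symmetric, satisfies the triangle inequality, and d_η((q₀, w₀), (q₁, w₁)) = 0 if and only if either (q₀ = q₁ and w₀ = w₁) or (w₀ = 0 and w₁ = 0). Hence d_η descends to a well-defined metric on the quotient W = (X × ℝ≥0)/(X × {0}). -/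
open scoped NNReal

/-- The weighted-shape distance
`d_η((q₀,w₀),(q₁,w₁)) = min (d(q₀,q₁) + η|w₀-w₁|) (η(w₀+w₁))` on `X × ℝ≥0`. -/
noncomputable def deta {X : Type*} [MetricSpace X] (η : ℝ)
    (p q : X × ℝ≥0) : ℝ :=
  min (dist p.1 q.1 + η * |((p.2 : ℝ)) - ((q.2 : ℝ))|)
    (η * (((p.2 : ℝ)) + ((q.2 : ℝ))))

/-- For `η > 0`, `d_η` is symmetric, satisfies the triangle inequality, and
vanishes iff the two pairs coincide or both weights are zero. Hence it only
depends on the classes under identifying all weight-zero pairs, so it descends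
to a well-defined metric on the quotient `W = (X × ℝ≥0)/(X × {0})`. -/
theorem deta_descends_to_quotient_metric {X : Type*} [MetricSpace X]
    (η : ℝ) (hη : 0 < η) :
    (∀ p q : X × ℝ≥0, deta η p q = deta η q p) ∧
    (∀ p q r : X × ℝ≥0, deta η p r ≤ deta η p q + deta η q r) ∧
    (∀ p q : X × ℝ≥0, deta η p q = 0 ↔ p = q ∨ (p.2 = 0 ∧ q.2 = 0)) ∧
    (∀ p p' q q' : X × ℝ≥0,
      (p = p' ∨ (p.2 = 0 ∧ p'.2 = 0)) → (q = q' ∨ (q.2 = 0 ∧ q'.2 = 0)) →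
      deta η p q = deta η p' q') := by
  have hsymm : ∀ p q : X × ℝ≥0, deta η p q = deta η q p := by
    intro p q
    simp [deta, dist_comm, abs_sub_comm, add_comm ((p.2 : ℝ))]
  have htri : ∀ p q r : X × ℝ≥0, deta η p r ≤ deta η p q + deta η q r := by
    intro p q r
    have ha : (0:ℝ) ≤ p.2 := p.2.coe_nonneg
    have hb : (0:ℝ) ≤ q.2 := q.2.coe_nonneg
    have hc : (0:ℝ) ≤ r.2 := r.2.coe_nonneg
    have hd : dist p.1 r.1 ≤ dist p.1 q.1 + dist q.1 r.1 := dist_triangle _ _ _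
    have habs : |((p.2:ℝ)) - r.2| ≤ |((p.2:ℝ)) - q.2| + |((q.2:ℝ)) - r.2| :=
      abs_sub_le _ _ _
    rcases min_cases (dist p.1 q.1 + η * |((p.2:ℝ)) - q.2|) (η*((p.2:ℝ)+q.2)) with ⟨h1,_⟩|⟨h1,_⟩ <;>
      rcases min_cases (dist q.1 r.1 + η * |((q.2:ℝ)) - r.2|) (η*((q.2:ℝ)+r.2)) with ⟨h2,_⟩|⟨h2,_⟩ <;>
      rw [deta, deta, deta, h1, h2]
    · exact le_trans (min_le_left _ _) (by nlinarith [mul_le_mul_of_nonneg_left habs hη.le])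
    · refine le_trans (min_le_right _ _) ?_
      nlinarith [le_abs_self ((p.2:ℝ) - q.2), dist_nonneg (x := p.1) (y := q.1)]
    · refine le_trans (min_le_right _ _) ?_
      nlinarith [le_abs_self ((r.2:ℝ) - q.2), abs_sub_comm ((q.2:ℝ)) ((r.2:ℝ)),
        dist_nonneg (x := q.1) (y := r.1)]
    · exact le_trans (min_le_right _ _) (by nlinarith)
  have hzero : ∀ p q : X × ℝ≥0, deta η p q = 0 ↔ p = q ∨ (p.2 = 0 ∧ q.2 = 0) := by
    intro p q
    have ha : (0:ℝ) ≤ p.2 := p.2.coe_nonneg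
    have hb : (0:ℝ) ≤ q.2 := q.2.coe_nonneg
    constructor
    · intro h
      rcases min_cases (dist p.1 q.1 + η * |((p.2 : ℝ)) - ((q.2 : ℝ))|)
        (η * (((p.2 : ℝ)) + ((q.2 : ℝ)))) with ⟨he, _⟩ | ⟨he, _⟩
      · left
        rw [deta, he] at h
        have h1 : (0:ℝ) ≤ η * |((p.2 : ℝ)) - ((q.2 : ℝ))| :=
          mul_nonneg hη.le (abs_nonneg _)
        have hdist : dist p.1 q.1 = 0 := le_antisymm (by linarith) dist_nonneg
        have habs : η * |((p.2 : ℝ)) - ((q.2 : ℝ))| = 0 := by linarith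
        have habs' : |((p.2 : ℝ)) - ((q.2 : ℝ))| = 0 := by
          rcases mul_eq_zero.mp habs with h' | h'
          · exact absurd h' hη.ne'
          · exact h'
        have hw : (p.2 : ℝ) = q.2 := by
          have := abs_eq_zero.mp habs'
          linarith
        exact Prod.ext (dist_eq_zero.mp hdist) (NNReal.coe_injective hw)
      · right
        rw [deta, he] at h
        have hsum : ((p.2:ℝ)) + q.2 = 0 := by
          rcases mul_eq_zero.mp h with h' | h'
          · exact absurd h' hη.ne'
          · exact h'
        constructor
        · exact NNReal.coe_injective (by push_cast; linarith)
        · exact NNReal.coe_injective (by push_cast; linarith)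
    · rintro (rfl | ⟨h1, h2⟩)
      · have : deta η p p ≤ 0 := by
          refine le_trans (min_le_left _ _) ?_
          simp
        have h2 : 0 ≤ deta η p p :=
          le_min (by positivity) (by positivity)
        linarith
      · have : deta η p q ≤ 0 := by
          refine le_trans (min_le_right _ _) ?_
          rw [h1, h2]; simp
        have h2 : 0 ≤ deta η p q :=
          le_min (by positivity) (by positivity)
        linarith
  refine ⟨hsymm, htri, hzero, ?_⟩
  intro p p' q q' hp hq
  have h1 : deta η p p' = 0 := (hzero p p').mpr hp
  have h2 : deta η q q' = 0 := (hzero q q').mpr hq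
  have l1 : deta η p q ≤ deta η p' q' := by
    have := htri p p' q
    have := htri p' q' q
    have := hsymm q q'
    linarith [htri p p' q', htri p q' q, hsymm q' q, hsymm q q']
  have l2 : deta η p' q' ≤ deta η p q := by
    linarith [htri p' p q', htri p q q', hsymm p p']
  linarith
end
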